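/- arXiv:2301.00902 — 2 statements merged into one kernel-verified Lean document; each statement's English description precedes it below -/
import Mathlib

section
/- Assume the positivity condition θ_k ∈ (0,π) for all 1 ≤ k ≤ N, ∑_{k=1}^N θ_k = 2π, N ≥ 5, and that there exist nonzero real numbers ε_1,…,ε_N with v_j·ε_j/ε_{N−1} ∈ ℤ and w_j·ε_j/ε_N ∈ ℤ for all 1 ≤ j ≤ N−2; let S := diag(ε_1,…,ε_{N−2}) and assume additionally that SᵀAS has integer entries. Define Θ(z;τ) := ∑_{m ∈ S·ℤ^{N−2}} χ(m + Im z/Im τ) · exp(2πi·(Q(m)·τ + B(m,z))) for τ ∈ ℂ with Im τ > 0 and z ∈ ℂ^{N−2}. Then for all a, b ∈ S·ℤ^{N−2}: Θ(z + aτ + b; τ) = exp(−2πi·Q(a)·τ) · exp(−2πi·B(a,z)) · Θ(z; τ). -/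
/-- The cumulative angle `φ_k = ∑_{a=1}^k θ_a`. -/
noncomputable def phiAng (θ : ℕ → ℝ) (k : ℕ) : ℝ := ∑ a ∈ Finset.Icc 1 k, θ a

/-- The signed-area quadratic form `Q` on `ℝ^{N-2}` (coordinates indexed `1,…,N-2`). -/
noncomputable def Qform (N : ℕ) (θ : ℕ → ℝ) (lam : ℕ → ℝ) : ℝ :=
  -(1/2) * ∑ j ∈ Finset.Icc 1 (N-2),
      Real.sin (phiAng θ N - phiAng θ j) * Real.sin (phiAng θ (N-1) - phiAng θ j)
        / Real.sin (θ N) * (lam j)^2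
  - ∑ j ∈ Finset.Icc 1 (N-2), ∑ k ∈ Finset.Icc (j+1) (N-2),
      Real.sin (phiAng θ N - phiAng θ j) * Real.sin (phiAng θ (N-1) - phiAng θ k)
        / Real.sin (θ N) * (lam j * lam k)

/-- The vector `v`, `v_j = -sin(φ_N - φ_j)/sin(θ_N)`. -/
noncomputable def vvec (N : ℕ) (θ : ℕ → ℝ) (j : ℕ) : ℝ :=
  -(Real.sin (phiAng θ N - phiAng θ j)) / Real.sin (θ N)

/-- The vector `w`, `w_j = sin(φ_{N-1} - φ_j)/sin(θ_N)`. -/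
noncomputable def wvec (N : ℕ) (θ : ℕ → ℝ) (j : ℕ) : ℝ :=
  Real.sin (phiAng θ (N-1) - phiAng θ j) / Real.sin (θ N)

/-- The extended side lengths: `λ_k` for `k ≤ N-2`, `λ_{N-1} = vᵀλ`, `λ_N = wᵀλ`. -/
noncomputable def lamExt (N : ℕ) (θ : ℕ → ℝ) (lam : ℕ → ℝ) (k : ℕ) : ℝ :=
  if k = N - 1 then ∑ j ∈ Finset.Icc 1 (N-2), vvec N θ j * lam j
  else if k = N then ∑ j ∈ Finset.Icc 1 (N-2), wvec N θ j * lam j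
  else lam k

/-- The lattice point `S·n ∈ S·ℤ^{N-2}`, as a function supported on `{1,…,N-2}`. -/
noncomputable def toLam (N : ℕ) (ε : ℕ → ℝ) (n : Fin (N-2) → ℤ) : ℕ → ℝ :=
  fun k => if h : 1 ≤ k ∧ k ≤ N - 2 then ε k * ((n ⟨k - 1, by omega⟩ : ℤ) : ℝ) else 0

/-- The Heaviside function. -/
noncomputable def Heav (t : ℝ) : ℝ := if 0 < t then 1 else 0

/-- The characteristic function `χ(λ) = ∏ H(λ_k) - (-1)^N ∏ H(-λ_k)`. -/
noncomputable def chiFn (N : ℕ) (θ : ℕ → ℝ) (lam : ℕ → ℝ) : ℝ :=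
  ∏ k ∈ Finset.Icc 1 N, Heav (lamExt N θ lam k)
    - (-1 : ℝ)^N * ∏ k ∈ Finset.Icc 1 N, Heav (-(lamExt N θ lam k))

/-- The complex-bilinear extension of the signed-area quadratic form. -/
noncomputable def QformC (N : ℕ) (θ : ℕ → ℝ) (lam : ℕ → ℂ) : ℂ :=
  -(1/2) * ∑ j ∈ Finset.Icc 1 (N-2),
      ((Real.sin (phiAng θ N - phiAng θ j) * Real.sin (phiAng θ (N-1) - phiAng θ j)
        / Real.sin (θ N) : ℝ) : ℂ) * (lam j)^2
  - ∑ j ∈ Finset.Icc 1 (N-2), ∑ k ∈ Finset.Icc (j+1) (N-2),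
      ((Real.sin (phiAng θ N - phiAng θ j) * Real.sin (phiAng θ (N-1) - phiAng θ k)
        / Real.sin (θ N) : ℝ) : ℂ) * (lam j * lam k)

/-- The bilinear form `B(a,z) = Q(a+z) - Q(a) - Q(z)`, extended complex-bilinearly in the
second argument. -/
noncomputable def BformC (N : ℕ) (θ : ℕ → ℝ) (a : ℕ → ℝ) (z : ℕ → ℂ) : ℂ :=
  QformC N θ (fun k => (a k : ℂ) + z k) - QformC N θ (fun k => (a k : ℂ)) - QformC N θ z

/-- The counting function `Θ_{Q,χ}(z;τ)`, summed over the lattice `S·ℤ^{N-2}`. -/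
noncomputable def Theta (N : ℕ) (θ ε : ℕ → ℝ) (z : ℕ → ℂ) (τ : ℂ) : ℂ :=
  ∑' n : Fin (N-2) → ℤ,
    (chiFn N θ (fun k => toLam N ε n k + (z k).im / τ.im) : ℂ) *
      Complex.exp (2 * (Real.pi : ℂ) * Complex.I *
        ((Qform N θ (toLam N ε n) : ℂ) * τ + BformC N θ (toLam N ε n) z))

-- my aux defs
noncomputable def myC (N : ℕ) (θ : ℕ → ℝ) (j k : ℕ) : ℝ :=
  Real.sin (phiAng θ N - phiAng θ j) * Real.sin (phiAng θ (N-1) - phiAng θ k)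
    / Real.sin (θ N)

noncomputable def myB (N : ℕ) (θ : ℕ → ℝ) (x y : ℕ → ℂ) : ℂ :=
  -∑ j ∈ Finset.Icc 1 (N-2), ((myC N θ j j : ℝ) : ℂ) * (x j * y j)
  - ∑ j ∈ Finset.Icc 1 (N-2), ∑ k ∈ Finset.Icc (j+1) (N-2),
      ((myC N θ j k : ℝ) : ℂ) * (x j * y k + x k * y j)

lemma QformC_add (N : ℕ) (θ : ℕ → ℝ) (x y : ℕ → ℂ) :
    QformC N θ (fun k => x k + y k) = QformC N θ x + QformC N θ y + myB N θ x y := by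
  unfold QformC myB myC
  rw [show (∑ j ∈ Finset.Icc 1 (N-2),
      ((Real.sin (phiAng θ N - phiAng θ j) * Real.sin (phiAng θ (N-1) - phiAng θ j)
        / Real.sin (θ N) : ℝ) : ℂ) * (x j + y j)^2)
    = ∑ j ∈ Finset.Icc 1 (N-2),
      (((Real.sin (phiAng θ N - phiAng θ j) * Real.sin (phiAng θ (N-1) - phiAng θ j)
        / Real.sin (θ N) : ℝ) : ℂ) * (x j)^2
      + ((Real.sin (phiAng θ N - phiAng θ j) * Real.sin (phiAng θ (N-1) - phiAng θ j)
        / Real.sin (θ N) : ℝ) : ℂ) * (y j)^2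
      + 2 * (((Real.sin (phiAng θ N - phiAng θ j) * Real.sin (phiAng θ (N-1) - phiAng θ j)
        / Real.sin (θ N) : ℝ) : ℂ) * (x j * y j)))
      from Finset.sum_congr rfl fun j _ => by ring]
  rw [show (∑ j ∈ Finset.Icc 1 (N-2), ∑ k ∈ Finset.Icc (j+1) (N-2),
      ((Real.sin (phiAng θ N - phiAng θ j) * Real.sin (phiAng θ (N-1) - phiAng θ k)
        / Real.sin (θ N) : ℝ) : ℂ) * ((x j + y j) * (x k + y k)))
    = ∑ j ∈ Finset.Icc 1 (N-2), (∑ k ∈ Finset.Icc (j+1) (N-2),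
      (((Real.sin (phiAng θ N - phiAng θ j) * Real.sin (phiAng θ (N-1) - phiAng θ k)
        / Real.sin (θ N) : ℝ) : ℂ) * (x j * x k)
      + ((Real.sin (phiAng θ N - phiAng θ j) * Real.sin (phiAng θ (N-1) - phiAng θ k)
        / Real.sin (θ N) : ℝ) : ℂ) * (y j * y k)
      + ((Real.sin (phiAng θ N - phiAng θ j) * Real.sin (phiAng θ (N-1) - phiAng θ k)
        / Real.sin (θ N) : ℝ) : ℂ) * (x j * y k + x k * y j)))
      from Finset.sum_congr rfl fun j _ => Finset.sum_congr rfl fun k _ => by ring]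
  simp only [Finset.sum_add_distrib]
  rw [← Finset.mul_sum]
  ring

lemma myB_add_left (N : ℕ) (θ : ℕ → ℝ) (x w y : ℕ → ℂ) :
    myB N θ (fun k => x k + w k) y = myB N θ x y + myB N θ w y := by
  unfold myB
  rw [show (∑ j ∈ Finset.Icc 1 (N-2), ((myC N θ j j : ℝ) : ℂ) * ((x j + w j) * y j))
      = ∑ j ∈ Finset.Icc 1 (N-2),
          (((myC N θ j j : ℝ) : ℂ) * (x j * y j) + ((myC N θ j j : ℝ) : ℂ) * (w j * y j))
      from Finset.sum_congr rfl fun j _ => by ring]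
  rw [show (∑ j ∈ Finset.Icc 1 (N-2), ∑ k ∈ Finset.Icc (j+1) (N-2),
        ((myC N θ j k : ℝ) : ℂ) * ((x j + w j) * y k + (x k + w k) * y j))
      = ∑ j ∈ Finset.Icc 1 (N-2), ∑ k ∈ Finset.Icc (j+1) (N-2),
          (((myC N θ j k : ℝ) : ℂ) * (x j * y k + x k * y j)
            + ((myC N θ j k : ℝ) : ℂ) * (w j * y k + w k * y j))
      from Finset.sum_congr rfl fun j _ => Finset.sum_congr rfl fun k _ => by ring]
  simp only [Finset.sum_add_distrib]
  ring

lemma myB_expand (N : ℕ) (θ : ℕ → ℝ) (x z c d : ℕ → ℂ) (τ : ℂ) :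
    myB N θ x (fun k => z k + c k * τ + d k)
      = myB N θ x z + myB N θ x c * τ + myB N θ x d := by
  unfold myB
  rw [show (∑ j ∈ Finset.Icc 1 (N-2), ((myC N θ j j : ℝ) : ℂ) * (x j * (z j + c j * τ + d j)))
      = ∑ j ∈ Finset.Icc 1 (N-2),
          (((myC N θ j j : ℝ) : ℂ) * (x j * z j) + (((myC N θ j j : ℝ) : ℂ) * (x j * c j)) * τ
            + ((myC N θ j j : ℝ) : ℂ) * (x j * d j))
      from Finset.sum_congr rfl fun j _ => by ring]
  rw [show (∑ j ∈ Finset.Icc 1 (N-2), ∑ k ∈ Finset.Icc (j+1) (N-2),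
        ((myC N θ j k : ℝ) : ℂ) * (x j * (z k + c k * τ + d k) + x k * (z j + c j * τ + d j)))
      = ∑ j ∈ Finset.Icc 1 (N-2), ∑ k ∈ Finset.Icc (j+1) (N-2),
          (((myC N θ j k : ℝ) : ℂ) * (x j * z k + x k * z j)
            + (((myC N θ j k : ℝ) : ℂ) * (x j * c k + x k * c j)) * τ
            + ((myC N θ j k : ℝ) : ℂ) * (x j * d k + x k * d j))
      from Finset.sum_congr rfl fun j _ => Finset.sum_congr rfl fun k _ => by ring]
  simp only [Finset.sum_add_distrib, ← Finset.sum_mul]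
  ring

lemma BformC_eq (N : ℕ) (θ : ℕ → ℝ) (a : ℕ → ℝ) (z : ℕ → ℂ) :
    BformC N θ a z = myB N θ (fun k => ((a k : ℝ) : ℂ)) z := by
  unfold BformC
  rw [QformC_add]
  ring

lemma Qform_cast (N : ℕ) (θ : ℕ → ℝ) (lam : ℕ → ℝ) :
    ((Qform N θ lam : ℝ) : ℂ) = QformC N θ (fun k => ((lam k : ℝ) : ℂ)) := by
  unfold Qform QformC
  push_cast
  norm_num

lemma toLam_add (N : ℕ) (ε : ℕ → ℝ) (n a : Fin (N-2) → ℤ) (k : ℕ) :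
    toLam N ε (n + a) k = toLam N ε n k + toLam N ε a k := by
  unfold toLam
  split_ifs with h
  · rw [Pi.add_apply]
    push_cast
    ring
  · ring

lemma vw_eq (N : ℕ) (θ : ℕ → ℝ) (j k : ℕ) :
    Real.sin (θ N) * vvec N θ j * wvec N θ k = -(myC N θ j k) := by
  unfold vvec wvec myC
  rcases eq_or_ne (Real.sin (θ N)) 0 with h | h
  · simp [h]
  · field_simp

lemma myB_int (N : ℕ) (θ ε : ℕ → ℝ)
    (hSAS : ∀ j k, 1 ≤ j → j ≤ N - 2 → 1 ≤ k → k ≤ N - 2 →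
      ∃ m : ℤ, ε j * (Real.sin (θ N) * vvec N θ (min j k) * wvec N θ (max j k)) * ε k = (m : ℝ))
    (n b : Fin (N-2) → ℤ) :
    ∃ K : ℤ, myB N θ (fun k => ((toLam N ε n k : ℝ) : ℂ)) (fun k => ((toLam N ε b k : ℝ) : ℂ))
      = (K : ℂ) := by
  have key : ∀ j k, 1 ≤ j → j ≤ N - 2 → 1 ≤ k → k ≤ N - 2 → j ≤ k →
      ∃ m : ℤ, myC N θ j k * (ε j * ε k) = (m : ℝ) := by
    intro j k h1 h2 h3 h4 hjk
    obtain ⟨m, hm⟩ := hSAS j k h1 h2 h3 h4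
    rw [min_eq_left hjk, max_eq_right hjk, vw_eq] at hm
    exact ⟨-m, by push_cast; linarith [hm, show ε j * -myC N θ j k * ε k
      = -(myC N θ j k * (ε j * ε k)) from by ring]⟩
  suffices h : (myB N θ (fun k => ((toLam N ε n k : ℝ) : ℂ))
      (fun k => ((toLam N ε b k : ℝ) : ℂ))) ∈ (Int.castRingHom ℂ).range by
    obtain ⟨K, hK⟩ := RingHom.mem_range.mp h
    exact ⟨K, by simpa using hK.symm⟩
  unfold myB
  refine Subring.sub_mem _ (Subring.neg_mem _ (Subring.sum_mem _ ?_)) (Subring.sum_mem _ ?_)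
  · intro j hj
    rw [Finset.mem_Icc] at hj
    obtain ⟨m, hm⟩ := key j j hj.1 hj.2 hj.1 hj.2 le_rfl
    refine RingHom.mem_range.mpr ⟨m * (n ⟨j-1, by omega⟩ * b ⟨j-1, by omega⟩), ?_⟩
    have h1 : toLam N ε n j = ε j * ((n ⟨j-1, by omega⟩ : ℤ) : ℝ) := by
      unfold toLam; rw [dif_pos (⟨hj.1, hj.2⟩ : 1 ≤ j ∧ j ≤ N - 2)]
    have h2 : toLam N ε b j = ε j * ((b ⟨j-1, by omega⟩ : ℤ) : ℝ) := by
      unfold toLam; rw [dif_pos (⟨hj.1, hj.2⟩ : 1 ≤ j ∧ j ≤ N - 2)]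
    beta_reduce
    rw [h1, h2]
    have := congrArg (fun r : ℝ => (r : ℂ)) hm
    simp only [Int.coe_castRingHom]; push_cast at this ⊢
    linear_combination (-(((n ⟨j-1, by omega⟩ : ℤ) : ℂ) * ((b ⟨j-1, by omega⟩ : ℤ) : ℂ))) * this
  · intro j hj
    rw [Finset.mem_Icc] at hj
    refine Subring.sum_mem _ ?_
    intro k hk
    rw [Finset.mem_Icc] at hk
    obtain ⟨m, hm⟩ := key j k hj.1 hj.2 (by omega) hk.2 (by omega)
    refine RingHom.mem_range.mpr
      ⟨m * (n ⟨j-1, by omega⟩ * b ⟨k-1, by omega⟩ + n ⟨k-1, by omega⟩ * b ⟨j-1, by omega⟩), ?_⟩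
    have h1 : toLam N ε n j = ε j * ((n ⟨j-1, by omega⟩ : ℤ) : ℝ) := by
      unfold toLam; rw [dif_pos (⟨hj.1, hj.2⟩ : 1 ≤ j ∧ j ≤ N - 2)]
    have h2 : toLam N ε b k = ε k * ((b ⟨k-1, by omega⟩ : ℤ) : ℝ) := by
      unfold toLam; rw [dif_pos (⟨(by omega : 1 ≤ k), hk.2⟩ : 1 ≤ k ∧ k ≤ N - 2)]
    have h3 : toLam N ε n k = ε k * ((n ⟨k-1, by omega⟩ : ℤ) : ℝ) := by
      unfold toLam; rw [dif_pos (⟨(by omega : 1 ≤ k), hk.2⟩ : 1 ≤ k ∧ k ≤ N - 2)]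
    have h4 : toLam N ε b j = ε j * ((b ⟨j-1, by omega⟩ : ℤ) : ℝ) := by
      unfold toLam; rw [dif_pos (⟨hj.1, hj.2⟩ : 1 ≤ j ∧ j ≤ N - 2)]
    beta_reduce
    rw [h1, h2, h3, h4]
    have := congrArg (fun r : ℝ => (r : ℂ)) hm
    simp only [Int.coe_castRingHom]; push_cast at this ⊢
    linear_combination (-(((n ⟨j-1, by omega⟩ : ℤ) : ℂ) * ((b ⟨k-1, by omega⟩ : ℤ) : ℂ)
      + ((n ⟨k-1, by omega⟩ : ℤ) : ℂ) * ((b ⟨j-1, by omega⟩ : ℤ) : ℂ))) * this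


/-- Elliptic transformation property of the counting function: for lattice vectors
`a, b ∈ S·ℤ^{N-2}`, `Θ(z + aτ + b; τ) = e^{-2πi Q(a)τ} e^{-2πi B(a,z)} Θ(z;τ)`. -/
theorem stmt14 (N : ℕ) (hN : 5 ≤ N) (θ : ℕ → ℝ)
    (hθ : ∀ k, 1 ≤ k → k ≤ N → θ k ∈ Set.Ioo 0 Real.pi)
    (hsum : ∑ k ∈ Finset.Icc 1 N, θ k = 2 * Real.pi)
    (ε : ℕ → ℝ) (hε : ∀ k, 1 ≤ k → k ≤ N → ε k ≠ 0)
    (hint : ∀ j, 1 ≤ j → j ≤ N - 2 →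
      (∃ z : ℤ, vvec N θ j * ε j / ε (N-1) = (z : ℝ)) ∧
      (∃ z : ℤ, wvec N θ j * ε j / ε N = (z : ℝ)))
    (hSAS : ∀ j k, 1 ≤ j → j ≤ N - 2 → 1 ≤ k → k ≤ N - 2 →
      ∃ m : ℤ, ε j * (Real.sin (θ N) * vvec N θ (min j k) * wvec N θ (max j k)) * ε k = (m : ℝ))
    (τ : ℂ) (hτ : 0 < τ.im) (z : ℕ → ℂ) (a b : Fin (N-2) → ℤ) :
    Theta N θ ε (fun k => z k + (toLam N ε a k : ℂ) * τ + (toLam N ε b k : ℂ)) τ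
      = Complex.exp (-(2 * (Real.pi : ℂ) * Complex.I * ((Qform N θ (toLam N ε a) : ℂ) * τ)))
        * Complex.exp (-(2 * (Real.pi : ℂ) * Complex.I * BformC N θ (toLam N ε a) z))
        * Theta N θ ε z τ := by
  have hτ' : τ.im ≠ 0 := ne_of_gt hτ
  set F : (Fin (N-2) → ℤ) → ℂ := fun n =>
    (chiFn N θ (fun k => toLam N ε n k + (z k).im / τ.im) : ℂ) *
      Complex.exp (2 * (Real.pi : ℂ) * Complex.I *
        ((Qform N θ (toLam N ε n) : ℂ) * τ + BformC N θ (toLam N ε n) z)) with hF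
  have hTheta : Theta N θ ε z τ = ∑' n, F n := rfl
  have key : ∀ n : Fin (N-2) → ℤ,
      (chiFn N θ (fun k => toLam N ε n k
          + ((z k + (toLam N ε a k : ℂ) * τ + (toLam N ε b k : ℂ)).im) / τ.im) : ℂ) *
        Complex.exp (2 * (Real.pi : ℂ) * Complex.I *
          ((Qform N θ (toLam N ε n) : ℂ) * τ + BformC N θ (toLam N ε n)
            (fun k => z k + (toLam N ε a k : ℂ) * τ + (toLam N ε b k : ℂ))))
      = (Complex.exp (-(2 * (Real.pi : ℂ) * Complex.I * ((Qform N θ (toLam N ε a) : ℂ) * τ)))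
          * Complex.exp (-(2 * (Real.pi : ℂ) * Complex.I * BformC N θ (toLam N ε a) z)))
        * F (n + a) := by
    intro n
    obtain ⟨K, hK⟩ := myB_int N θ ε hSAS n b
    have hchi : (fun k => toLam N ε n k
          + ((z k + (toLam N ε a k : ℂ) * τ + (toLam N ε b k : ℂ)).im) / τ.im)
        = fun k => toLam N ε (n + a) k + (z k).im / τ.im := by
      funext k
      rw [toLam_add]
      simp only [Complex.add_im, Complex.mul_im, Complex.ofReal_im, Complex.ofReal_re,
        zero_mul, mul_zero, add_zero, zero_add]
      field_simp
      ring
    rw [hchi]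
    simp only [hF]
    have hq : ((Qform N θ (toLam N ε (n + a)) : ℝ) : ℂ)
        = QformC N θ (fun k => ((toLam N ε n k : ℝ) : ℂ))
          + QformC N θ (fun k => ((toLam N ε a k : ℝ) : ℂ))
          + myB N θ (fun k => ((toLam N ε n k : ℝ) : ℂ)) (fun k => ((toLam N ε a k : ℝ) : ℂ)) := by
      rw [Qform_cast, show (fun k => ((toLam N ε (n + a) k : ℝ) : ℂ))
          = fun k => ((toLam N ε n k : ℝ) : ℂ) + ((toLam N ε a k : ℝ) : ℂ) from
          funext fun k => by rw [toLam_add]; push_cast; ring]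
      exact QformC_add N θ _ _
    have hb4 : BformC N θ (toLam N ε (n + a)) z
        = myB N θ (fun k => ((toLam N ε n k : ℝ) : ℂ)) z
          + myB N θ (fun k => ((toLam N ε a k : ℝ) : ℂ)) z := by
      rw [BformC_eq, show (fun k => ((toLam N ε (n + a) k : ℝ) : ℂ))
          = fun k => ((toLam N ε n k : ℝ) : ℂ) + ((toLam N ε a k : ℝ) : ℂ) from
          funext fun k => by rw [toLam_add]; push_cast; ring]
      exact myB_add_left N θ _ _ _
    have hb1 : BformC N θ (toLam N ε n)
          (fun k => z k + (toLam N ε a k : ℂ) * τ + (toLam N ε b k : ℂ))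
        = myB N θ (fun k => ((toLam N ε n k : ℝ) : ℂ)) z
          + myB N θ (fun k => ((toLam N ε n k : ℝ) : ℂ)) (fun k => ((toLam N ε a k : ℝ) : ℂ)) * τ
          + (K : ℂ) := by
      rw [BformC_eq, ← hK]
      exact myB_expand N θ _ z _ _ τ
    rw [hb1, hq, hb4, BformC_eq N θ (toLam N ε a) z, Qform_cast N θ (toLam N ε n),
      Qform_cast N θ (toLam N ε a)]
    rw [mul_left_comm, ← Complex.exp_add, ← Complex.exp_add]
    congr 1
    rw [Complex.exp_eq_exp_iff_exists_int]
    exact ⟨K, by ring⟩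
  calc Theta N θ ε (fun k => z k + (toLam N ε a k : ℂ) * τ + (toLam N ε b k : ℂ)) τ
      = ∑' n : Fin (N-2) → ℤ,
          ((Complex.exp (-(2 * (Real.pi : ℂ) * Complex.I * ((Qform N θ (toLam N ε a) : ℂ) * τ)))
            * Complex.exp (-(2 * (Real.pi : ℂ) * Complex.I * BformC N θ (toLam N ε a) z)))
            * F (n + a)) := tsum_congr key
    _ = (Complex.exp (-(2 * (Real.pi : ℂ) * Complex.I * ((Qform N θ (toLam N ε a) : ℂ) * τ)))
            * Complex.exp (-(2 * (Real.pi : ℂ) * Complex.I * BformC N θ (toLam N ε a) z)))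
          * ∑' n : Fin (N-2) → ℤ, F (n + a) := tsum_mul_left
    _ = (Complex.exp (-(2 * (Real.pi : ℂ) * Complex.I * ((Qform N θ (toLam N ε a) : ℂ) * τ)))
            * Complex.exp (-(2 * (Real.pi : ℂ) * Complex.I * BformC N θ (toLam N ε a) z)))
          * ∑' n : Fin (N-2) → ℤ, F n := by
        congr 1
        have h := (Equiv.addRight a).tsum_eq F
        simpa only [Equiv.coe_addRight] using h
    _ = _ := by rw [← hTheta, mul_assoc]
end

section
/- Let Q be a quadratic form of signature (1,s) with s ≥ 1 on V = ℝ^{s+1}, with polar form B, and D_+ := {Q > 0}. Let c_1,…,c_{s+1} ∈ V be linearly independent vectors such that the simplicial cone R(C) := {x : B(c_j,x) ≥ 0 for all 1 ≤ j ≤ s+1} ∪ {x : B(c_j,x) ≤ 0 for all 1 ≤ j ≤ s+1} spans V and satisfies R(C) ⊆ D_+ ∪ {0}. Then for every proper subset T ⊊ {1,…,s+1}, Q restricted to span{c_j : j ∈ T} is negative definite (a subspace of dimension |T|). -/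
/-!
Since the polar form is nondegenerate, the dual basis of `c` contains, for any `j₀ ∉ T`, a vector
`z` with `B(c_j, z) = δ_{j j₀}`. Then `z` lies in `R(C) \ {0}`, so `Q z > 0`, while `z` is
`B`-orthogonal to every `c_j` with `j ∈ T`. In signature `(1, s)` the orthogonal complement of a
timelike vector is negative definite (reverse Cauchy–Schwarz), so `Q < 0` on the span of
`c_j, j ∈ T`; its dimension is `|T|` by linear independence.
-/

open Finset QuadraticMap

section Lorentzian

variable {V ι : Type*} [AddCommGroup V] [Module ℝ V] [Fintype ι] [DecidableEq ι]

/-- `Q` has signature `(1, |ι| - 1)`, with `b i₀` the positive direction. -/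
def IsLorentzianBasis (Q : QuadraticForm ℝ V) (b : Module.Basis ι ℝ V) (i₀ : ι) : Prop :=
  ∀ x, Q x = b.repr x i₀ ^ 2 - ∑ i ∈ univ.erase i₀, b.repr x i ^ 2

/-- Reverse Cauchy–Schwarz inequality: a nonzero vector orthogonal to a timelike vector is
spacelike. -/
theorem sq_lt_sum_sq_of_mul_eq_sum_mul {i₀ : ι} {a w : ι → ℝ}
    (ha : ∑ i ∈ univ.erase i₀, a i ^ 2 < a i₀ ^ 2)
    (horth : a i₀ * w i₀ = ∑ i ∈ univ.erase i₀, a i * w i) (hw : w ≠ 0) :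
    w i₀ ^ 2 < ∑ i ∈ univ.erase i₀, w i ^ 2 := by
  set S := univ.erase i₀
  by_contra! hle
  have hCS : (a i₀ * w i₀) ^ 2 ≤ (∑ i ∈ S, a i ^ 2) * ∑ i ∈ S, w i ^ 2 :=
    horth ▸ sum_mul_sq_le_sq_mul_sq S a w
  have hS : 0 ≤ ∑ i ∈ S, a i ^ 2 := sum_nonneg fun i _ => sq_nonneg (a i)
  have hw₀ : w i₀ = 0 := by
    have : (a i₀ ^ 2 - ∑ i ∈ S, a i ^ 2) * w i₀ ^ 2 ≤ (a i₀ ^ 2 - ∑ i ∈ S, a i ^ 2) * 0 := by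
      nlinarith [mul_le_mul_of_nonneg_left hle hS]
    exact pow_eq_zero_iff two_ne_zero |>.1 <|
      le_antisymm (le_of_mul_le_mul_left this (sub_pos.2 ha)) (sq_nonneg _)
  have hwS : ∀ i ∈ S, w i ^ 2 = 0 :=
    (sum_eq_zero_iff_of_nonneg fun i _ => sq_nonneg (w i)).1 <|
      le_antisymm (by simpa [hw₀] using hle) (sum_nonneg fun i _ => sq_nonneg (w i))
  refine hw (funext fun i => ?_)
  by_cases hi : i = i₀
  · exact hi ▸ hw₀
  · exact pow_eq_zero_iff two_ne_zero |>.1 (hwS i (mem_erase.2 ⟨hi, mem_univ i⟩))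

namespace IsLorentzianBasis

variable {Q : QuadraticForm ℝ V} {b : Module.Basis ι ℝ V} {i₀ : ι}

theorem polar_eq (hQ : IsLorentzianBasis Q b i₀) (x y : V) :
    polar Q x y =
      2 * (b.repr x i₀ * b.repr y i₀ - ∑ i ∈ univ.erase i₀, b.repr x i * b.repr y i) := by
  rw [polar, hQ (x + y), hQ x, hQ y]
  simp only [map_add, Finsupp.add_apply, add_sq, mul_assoc, sum_add_distrib, ← mul_sum]
  ring

theorem separatingLeft_polarBilin (hQ : IsLorentzianBasis Q b i₀) :
    (polarBilin Q).SeparatingLeft := by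
  intro x hx
  refine b.ext_elem fun i => ?_
  have := hx (b i)
  simp only [polarBilin_apply_apply, hQ.polar_eq, b.repr_self, Finsupp.single_apply] at this
  by_cases hi : i = i₀
  · subst hi; simpa using this
  · simp [hi] at this
    simpa using this

theorem nondegenerate_polarBilin (hQ : IsLorentzianBasis Q b i₀) :
    (polarBilin Q).Nondegenerate :=
  have := Module.Free.of_basis b
  have := Module.Finite.of_basis b
  LinearMap.BilinForm.Nondegenerate.ofSeparatingLeft hQ.separatingLeft_polarBilin

theorem neg_of_polar_eq_zero (hQ : IsLorentzianBasis Q b i₀) {z x : V} (hz : 0 < Q z)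
    (horth : polar Q z x = 0) (hx : x ≠ 0) : Q x < 0 := by
  rw [hQ.polar_eq] at horth
  rw [hQ] at hz ⊢
  have := sq_lt_sum_sq_of_mul_eq_sum_mul (a := b.repr z) (w := b.repr x) (by linarith)
    (by linarith) (fun h => hx (b.ext_elem fun i => by simpa using congrFun h i))
  linarith

end IsLorentzianBasis

end Lorentzian

theorem QuadraticMap.exists_ne_zero_polar_eq_ite {K V ι : Type*} [Field K] [AddCommGroup V]
    [Module K V] [Fintype ι] [DecidableEq ι] {Q : QuadraticForm K V}
    (hQ : (polarBilin Q).Nondegenerate) (c : Module.Basis ι K V) (j₀ : ι) :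
    ∃ z ≠ 0, ∀ j, polar Q (c j) z = if j = j₀ then 1 else 0 :=
  ⟨LinearMap.BilinForm.dualBasis (polarBilin Q) hQ c j₀, Module.Basis.ne_zero _ _, fun j => by
    rw [polar_comm, ← polarBilin_apply_apply, LinearMap.BilinForm.apply_dualBasis_left]⟩

theorem stmt17_general (s : ℕ) (Q : QuadraticForm ℝ (Fin (s+1) → ℝ))
    (hsig : ∃ b : Module.Basis (Fin (s+1)) ℝ (Fin (s+1) → ℝ), ∀ x, Q x =
      (b.repr x 0)^2 - ∑ i ∈ Finset.univ.erase (0 : Fin (s+1)), (b.repr x i)^2)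
    (c : Fin (s+1) → (Fin (s+1) → ℝ)) (hindep : LinearIndependent ℝ c)
    (hsub : ({x : Fin (s+1) → ℝ | ∀ j, 0 ≤ QuadraticMap.polar Q (c j) x} ∪
              {x : Fin (s+1) → ℝ | ∀ j, QuadraticMap.polar Q (c j) x ≤ 0})
        ⊆ {x : Fin (s+1) → ℝ | 0 < Q x} ∪ {0})
    (T : Finset (Fin (s+1))) (hT : T ≠ Finset.univ) :
    (∀ x ∈ Submodule.span ℝ (c '' (T : Set (Fin (s+1)))), x ≠ 0 → Q x < 0) ∧
    Module.finrank ℝ (Submodule.span ℝ (c '' (T : Set (Fin (s+1))))) = T.card := by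
  obtain ⟨b, hQ⟩ : ∃ b, IsLorentzianBasis Q b 0 := hsig
  obtain ⟨j₀, hj₀⟩ : ∃ j, j ∉ T := by simpa [eq_univ_iff_forall] using hT
  obtain ⟨z, hz₀, hz⟩ := exists_ne_zero_polar_eq_ite hQ.nondegenerate_polarBilin
    (basisOfLinearIndependentOfCardEqFinrank hindep (by simp)) j₀
  simp only [coe_basisOfLinearIndependentOfCardEqFinrank] at hz
  have hQz : 0 < Q z :=
    (hsub (.inl fun j => by rw [hz]; split_ifs <;> norm_num)).resolve_right hz₀
  have horth : Submodule.span ℝ (c '' T) ≤ LinearMap.ker (polarBilin Q z) :=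
    Submodule.span_le.2 <| by
      rintro _ ⟨j, hj, rfl⟩
      simp [polar_comm Q z, hz, show j ≠ j₀ from fun h => hj₀ (h ▸ hj)]
  refine ⟨fun x hx hx₀ => hQ.neg_of_polar_eq_zero hQz (horth hx) hx₀, ?_⟩
  rw [Set.image_eq_range, finrank_span_eq_card (b := fun j : (T : Set (Fin (s+1))) => c j)
    (hindep.comp _ Subtype.val_injective)]
  simp

/-- For a simplicial cone `R(C) ⊆ D_+ ∪ {0}` in a quadratic space of signature `(1,s)` with
linearly independent normal vectors `c_1,…,c_{s+1}`, the span of any proper subset of the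
normal vectors is a negative definite subspace of dimension `|T|`. -/
theorem stmt17 (s : ℕ) (hs : 1 ≤ s) (Q : QuadraticForm ℝ (Fin (s+1) → ℝ))
    (hsig : ∃ b : Module.Basis (Fin (s+1)) ℝ (Fin (s+1) → ℝ), ∀ x, Q x =
      (b.repr x 0)^2 - ∑ i ∈ Finset.univ.erase (0 : Fin (s+1)), (b.repr x i)^2)
    (c : Fin (s+1) → (Fin (s+1) → ℝ)) (hindep : LinearIndependent ℝ c)
    (hsub : ({x : Fin (s+1) → ℝ | ∀ j, 0 ≤ QuadraticMap.polar Q (c j) x} ∪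
              {x : Fin (s+1) → ℝ | ∀ j, QuadraticMap.polar Q (c j) x ≤ 0})
        ⊆ {x : Fin (s+1) → ℝ | 0 < Q x} ∪ {0})
    (hspan : Submodule.span ℝ
        ({x : Fin (s+1) → ℝ | ∀ j, 0 ≤ QuadraticMap.polar Q (c j) x} ∪
         {x : Fin (s+1) → ℝ | ∀ j, QuadraticMap.polar Q (c j) x ≤ 0}) = ⊤)
    (T : Finset (Fin (s+1))) (hT : T ≠ Finset.univ) :
    (∀ x ∈ Submodule.span ℝ (c '' (T : Set (Fin (s+1)))), x ≠ 0 → Q x < 0) ∧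
    Module.finrank ℝ (Submodule.span ℝ (c '' (T : Set (Fin (s+1))))) = T.card :=
  stmt17_general s Q hsig c hindep hsub T hT
end
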